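/- For every integer Q ≥ 2 and every integer s with 1 ≤ s ≤ Q, the exposure-time estimand weight of the immediate treatment effect estimator at γ = 0 (independence working correlation) is nonnegative: w₁(Q,0,s) = 6(s−Q−1)(s−Q)/(Q(Q+1)(2Q−2)) ≥ 0. -/
import Mathlib


/-- The estimand weight `w₁(Q,γ,s)` of the exposure time-varying treatment effect
`δ_s` in the misspecified immediate treatment effect estimator. -/
noncomputable def w1 (Q : ℕ) (γ : ℝ) (s : ℕ) : ℝ :=
  6 * ((s : ℝ) - (Q : ℝ) - 1) *
      ((1 + 2 * γ * (Q : ℝ)) * (s : ℝ) - (1 + γ + γ * (Q : ℝ)) * (Q : ℝ)) /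
    ((Q : ℝ) * ((Q : ℝ) + 1) * (γ * (Q : ℝ) ^ 2 + 2 * (Q : ℝ) - γ * (Q : ℝ) - 2))

/-- At `γ = 0` (independence working correlation), the exposure-time estimand weight of
the IT estimator equals `6(s−Q−1)(s−Q)/(Q(Q+1)(2Q−2))` and is nonnegative. -/
theorem IT_exposure_weight_indep_nonneg (Q : ℕ) (hQ : 2 ≤ Q)
    (s : ℕ) (hs1 : 1 ≤ s) (hsQ : s ≤ Q) :
    w1 Q 0 s = 6 * ((s : ℝ) - (Q : ℝ) - 1) * ((s : ℝ) - (Q : ℝ)) /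
        ((Q : ℝ) * ((Q : ℝ) + 1) * (2 * (Q : ℝ) - 2))
    ∧ 0 ≤ w1 Q 0 s := by
  have hQ' : (2 : ℝ) ≤ (Q : ℝ) := by exact_mod_cast hQ
  have hsQ' : (s : ℝ) ≤ (Q : ℝ) := by exact_mod_cast hsQ
  have heq : w1 Q 0 s = 6 * ((s : ℝ) - (Q : ℝ) - 1) * ((s : ℝ) - (Q : ℝ)) /
        ((Q : ℝ) * ((Q : ℝ) + 1) * (2 * (Q : ℝ) - 2)) := by
    unfold w1; ring_nf
  refine ⟨heq, ?_⟩
  rw [heq]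
  apply div_nonneg
  · have h1 : (s : ℝ) - (Q : ℝ) - 1 ≤ 0 := by linarith
    have h2 : (s : ℝ) - (Q : ℝ) ≤ 0 := by linarith
    nlinarith
  · nlinarith [sq_nonneg ((Q:ℝ)-1), sq_nonneg ((Q:ℝ)+1), hQ']
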